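/- arXiv:2007.03736 — 4 statements merged into one kernel-verified Lean document; each statement's English description precedes it below -/
import Mathlib

section
/- Let μ be a finite Borel measure on ℝ^d with closed support K_μ, let φ : K_μ → ℝ^d be Borel measurable, and let ν = φ_*μ be the pushforward measure. Then the following are equivalent: (1) φ is μ-essentially injective, i.e. for every f ∈ L²(μ) there exists h ∈ L²(ν) such that f(x) = h(φ(x)) for μ-a.e. x; (2) there exists a Borel set 𝒩 ⊂ K_μ with μ(𝒩) = 0 such that the restriction of φ to K_μ ∖ 𝒩 is injective. -/
/-! An injective `L²` function `g` detects injectivity: if `g = h ∘ φ` almost everywhere, then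
`φ x = φ y` forces `g x = g y`, hence `x = y`, off a null set. On a standard Borel space such a
`g` exists, namely `arctan` of a measurable embedding into `ℝ`. Conversely, if `φ` is injective on
a conull Borel set `S`, then `φ|_S` is a measurable embedding (Lusin–Souslin), so every measurable
function on `S` extends measurably along it. -/

open MeasureTheory Filter Set
open scoped Real ENNReal Topology

noncomputable section

/-- `φ` is `μ`-essentially injective: every `f ∈ L²(μ)` factors `μ`-a.e. through `φ`
with a factor in `L²(φ⋆μ)`. -/
def EssInj {α β : Type*} [MeasurableSpace α] [MeasurableSpace β]
    (μ : Measure α) (φ : α → β) : Prop :=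
  ∀ f : α → ℂ, MemLp f 2 μ →
    ∃ h : β → ℂ, MemLp h 2 (Measure.map φ μ) ∧ f =ᵐ[μ] fun x => h (φ x)

/-- The closed support `K_μ` of a Borel measure: the set of points all of whose open
neighbourhoods have positive measure. -/
def msupport {α : Type*} [TopologicalSpace α] [MeasurableSpace α] (μ : Measure α) : Set α :=
  {x | ∀ U : Set α, IsOpen U → x ∈ U → 0 < μ U}

theorem msupport_eq_support {α : Type*} [TopologicalSpace α] [MeasurableSpace α]
    (μ : Measure α) : msupport μ = μ.support := by
  ext x
  simp only [msupport, Measure.support_eq_forall_isOpen, mem_ofPred_eq]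
  exact forall_congr' fun _ => Imp.swap

section

variable {α β : Type*} [MeasurableSpace α] [MeasurableSpace β] {μ : Measure α} {φ : α → β}

theorem EssInj.exists_null_injOn_compl_of_injective (hφ : EssInj μ φ) {g : α → ℂ}
    (hg : MemLp g 2 μ) (hg_inj : Function.Injective g) :
    ∃ N : Set α, MeasurableSet N ∧ μ N = 0 ∧ InjOn φ Nᶜ := by
  obtain ⟨h, -, hgh⟩ := hφ g hg
  set N := toMeasurable μ {x | g x ≠ h (φ x)}
  have hN : ∀ x ∉ N, g x = h (φ x) := fun x hx => not_not.1 fun hne =>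
    hx (subset_toMeasurable μ _ hne)
  refine ⟨N, measurableSet_toMeasurable μ _, (measure_toMeasurable _).trans (ae_iff.1 hgh), ?_⟩
  intro x hx y hy hxy
  exact hg_inj (by rw [hN x hx, hN y hy, hxy])

theorem exists_memLp_injective [StandardBorelSpace α] [IsFiniteMeasure μ] (p : ℝ≥0∞) :
    ∃ g : α → ℂ, MemLp g p μ ∧ Function.Injective g := by
  refine ⟨fun x => (Real.arctan (embeddingReal α x) : ℂ), ?_, ?_⟩
  · refine MemLp.of_bound (by fun_prop) (π / 2) (ae_of_all _ fun x => ?_)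
    rw [Complex.norm_real, Real.norm_eq_abs]
    exact abs_le.2 ⟨(Real.neg_pi_div_two_lt_arctan _).le, (Real.arctan_lt_pi_div_two _).le⟩
  · exact Complex.ofReal_injective.comp <| Real.arctan_injective.comp
      (measurableEmbedding_embeddingReal α).injective

theorem EssInj.exists_null_injOn_compl [StandardBorelSpace α] [IsFiniteMeasure μ]
    (hφ : EssInj μ φ) : ∃ N : Set α, MeasurableSet N ∧ μ N = 0 ∧ InjOn φ Nᶜ :=
  have ⟨_, hg, hg_inj⟩ := exists_memLp_injective (μ := μ) 2
  hφ.exists_null_injOn_compl_of_injective hg hg_inj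

theorem essInj_of_injOn [StandardBorelSpace α] [MeasurableSpace.CountablySeparated β]
    (hφ : Measurable φ) {S : Set α} (hS : MeasurableSet S) (hS_ae : ∀ᵐ x ∂μ, x ∈ S)
    (hφS : InjOn φ S) : EssInj μ φ := by
  intro f hf
  have : StandardBorelSpace S := hS.standardBorel
  have hemb : MeasurableEmbedding (S.domRestrict φ) :=
    (hφ.comp measurable_subtype_coe).measurableEmbedding hφS.injective
  obtain ⟨h, hh, hh_comp⟩ := hemb.exists_measurable_extend
    (hf.1.measurable_mk.comp measurable_subtype_coe) fun _ => ⟨0⟩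
  have hfh : f =ᵐ[μ] fun x => h (φ x) := by
    filter_upwards [hf.1.ae_eq_mk, hS_ae] with x hfx hxS
    rw [hfx]
    exact (congrFun hh_comp ⟨x, hxS⟩).symm
  refine ⟨h, ?_, hfh⟩
  rw [memLp_map_measure_iff hh.aestronglyMeasurable hφ.aemeasurable]
  exact hf.ae_eq hfh

end

/-- For a finite Borel measure `μ` on `ℝ^d` with closed support `K_μ` and a
Borel measurable `φ`, `φ` is `μ`-essentially injective if and only if there is a Borel set
`𝒩 ⊆ K_μ` with `μ 𝒩 = 0` such that `φ` is injective on `K_μ \ 𝒩`. -/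
theorem statement1 {d : ℕ} (μ : Measure (Fin d → ℝ)) [IsFiniteMeasure μ]
    (φ : (Fin d → ℝ) → (Fin d → ℝ)) (hφ : Measurable φ) :
    EssInj μ φ ↔
      ∃ N : Set (Fin d → ℝ), MeasurableSet N ∧ N ⊆ msupport μ ∧ μ N = 0 ∧
        Set.InjOn φ (msupport μ \ N) := by
  rw [msupport_eq_support]
  have hK : MeasurableSet μ.support := Measure.isClosed_support.measurableSet
  constructor
  · intro hess
    obtain ⟨N, hN, hN0, hinj⟩ := hess.exists_null_injOn_compl
    refine ⟨μ.support ∩ N, hK.inter hN, inter_subset_left,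
      measure_mono_null inter_subset_right hN0, hinj.mono ?_⟩
    exact fun x hx hxN => hx.2 ⟨hx.1, hxN⟩
  · rintro ⟨N, hN, -, hN0, hinj⟩
    refine essInj_of_injOn hφ (hK.diff hN) ?_ hinj
    filter_upwards [Measure.support_mem_ae, compl_mem_ae_iff.2 hN0] with x hxK hxN
    exact ⟨hxK, hxN⟩
end
end

section
/- Let K ⊂ ℝ^d be a bounded measurable set of positive Lebesgue measure and let φ : K → ℝ^d be a continuous function mapping Lebesgue measure zero sets to measure zero sets. Suppose there exist a set E ⊂ ℝ^d of positive Lebesgue measure and disjoint measurable sets U₁, U₂ ⊂ K, each of positive Lebesgue measure, with E = φ(U₁) = φ(U₂). Then φ is not μ-essentially injective, where μ is Lebesgue measure restricted to K. -/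
open MeasureTheory Filter Set
open scoped Real ENNReal Topology

noncomputable section

/-! Write the indicator `f` of `U₁` as `h ∘ φ` off a null set `N`. Every point of
`φ(U₁) ∩ φ(U₂)` outside `φ(N)` would have preimages `u₁ ∈ U₁` and `u₂ ∈ U₂` with
`1 = f u₁ = h (φ u₁) = h (φ u₂) = f u₂ = 0`, so `φ(U₁) ∩ φ(U₂) ⊆ φ(N)` is null,
contradicting `0 < |E|`. -/

theorem EssInj.measure_image_inter_image_eq_zero {α β : Type*} [MeasurableSpace α]
    [MeasurableSpace β] {μ : Measure α} {ν : Measure β} {φ : α → β} (hφ : EssInj μ φ)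
    {S A B : Set α} (hnull : ∀ N ⊆ S, μ N = 0 → ν (φ '' N) = 0)
    (hAm : MeasurableSet A) (hAfin : μ A ≠ ∞) (hAS : A ⊆ S) (hBS : B ⊆ S)
    (hAB : Disjoint A B) : ν (φ '' A ∩ φ '' B) = 0 := by
  set f : α → ℂ := A.indicator 1
  obtain ⟨h, -, hfh⟩ := hφ f (memLp_indicator_const 2 hAm 1 (Or.inr hAfin))
  set N := {x | f x ≠ h (φ x)} ∩ S
  have hN : μ N = 0 := measure_mono_null inter_subset_left (ae_iff.mp hfh)
  refine measure_mono_null ?_ (hnull N inter_subset_right hN)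
  rintro y ⟨⟨a, ha, rfl⟩, ⟨b, hb, hba⟩⟩
  by_contra hy
  have hfa : f a = h (φ a) := not_not.mp fun hne => hy ⟨a, ⟨hne, hAS ha⟩, rfl⟩
  have hfb : f b = h (φ a) :=
    not_not.mp fun hne => hy ⟨b, ⟨fun hb' => hne (hba ▸ hb'), hBS hb⟩, hba⟩
  have hfa1 : f a = 1 := indicator_of_mem ha _
  have hfb0 : f b = 0 := indicator_of_notMem (disjoint_right.mp hAB hb) _
  exact one_ne_zero (hfa1.symm.trans (hfa.trans (hfb.symm.trans hfb0)))

theorem statement12_general {d : ℕ} (K : Set (Fin d → ℝ)) (hKb : Bornology.IsBounded K)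
    (φ : (Fin d → ℝ) → (Fin d → ℝ))
    (hnull : ∀ N ⊆ K, volume N = 0 → volume (φ '' N) = 0)
    (E U₁ U₂ : Set (Fin d → ℝ))
    (hU₁ : U₁ ⊆ K) (hU₂ : U₂ ⊆ K) (hU₁m : MeasurableSet U₁)
    (hdisj : Disjoint U₁ U₂)
    (hEpos : 0 < volume E) (hE₁ : E = φ '' U₁) (hE₂ : E = φ '' U₂) :
    ¬ EssInj (volume.restrict K) φ := by
  intro hφ
  have hnull_restrict : ∀ N ⊆ K, volume.restrict K N = 0 → volume (φ '' N) = 0 :=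
    fun N hNK hN => hnull N hNK <| nonpos_iff_eq_zero.mp <| by
      simpa only [inter_eq_left.mpr hNK, hN] using Measure.le_restrict_apply (μ := volume) K N
  have hU₁fin : volume.restrict K U₁ ≠ ∞ :=
    ((Measure.restrict_apply_le K U₁).trans_lt (hKb.subset hU₁).measure_lt_top).ne
  have hE : volume E = 0 := by
    have := hφ.measure_image_inter_image_eq_zero hnull_restrict hU₁m hU₁fin hU₁ hU₂ hdisj
    rwa [← hE₁, ← hE₂, inter_self] at this
  exact hEpos.ne' hE

/-- Let `K ⊆ ℝ^d` be bounded measurable of positive Lebesgue measure, and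
let `φ : K → ℝ^d` be continuous and map null sets to null sets.  If a set `E` of positive
measure satisfies `E = φ(U₁) = φ(U₂)` for disjoint subsets `U₁, U₂ ⊆ K` of positive measure,
then `φ` is not essentially injective with respect to Lebesgue measure restricted to `K`. -/
theorem statement12 {d : ℕ} (K : Set (Fin d → ℝ)) (hKb : Bornology.IsBounded K)
    (hKm : MeasurableSet K) (hKpos : 0 < volume K)
    (φ : (Fin d → ℝ) → (Fin d → ℝ)) (hc : ContinuousOn φ K)
    (hnull : ∀ N ⊆ K, volume N = 0 → volume (φ '' N) = 0)
    (E U₁ U₂ : Set (Fin d → ℝ))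
    (hU₁ : U₁ ⊆ K) (hU₂ : U₂ ⊆ K) (hU₁m : MeasurableSet U₁) (hU₂m : MeasurableSet U₂)
    (hdisj : Disjoint U₁ U₂) (hU₁pos : 0 < volume U₁) (hU₂pos : 0 < volume U₂)
    (hEpos : 0 < volume E) (hE₁ : E = φ '' U₁) (hE₂ : E = φ '' U₂) :
    ¬ EssInj (volume.restrict K) φ :=
  statement12_general K hKb φ hnull E U₁ U₂ hU₁ hU₂ hU₁m hdisj hEpos hE₁ hE₂
end
end

section
/- Let φ : [0,1] → ℝ be a continuous function mapping Lebesgue measure zero sets to Lebesgue measure zero sets. If φ is μ-essentially injective, where μ is Lebesgue measure restricted to [0,1], then φ is injective on [0,1]. -/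
/-!
Testing essential injectivity on the identity `x ↦ x` yields `h` with `x = h (φ x)` off a null
set `N`, so `φ` is injective on `[0,1] \ N`. If `φ a = φ b` with `a < b`, either `φ` is constant
on `[a,b]`, which then has measure zero, or `φ` takes some value `φ t ≠ φ a` there; by the
intermediate value theorem every value strictly between `φ a` and `φ t` is then taken twice, so
all of these values lie in the null set `φ '' N`.
-/

open MeasureTheory Filter Set
open scoped Real ENNReal Topology

noncomputable section

open Function

theorem EssInj.exists_null_injOn_compl_s13 {α β : Type*} [MeasurableSpace α] [MeasurableSpace β]
    {μ : Measure α} {φ : α → β} (hφ : EssInj μ φ) {g : α → ℂ} (hg : MemLp g 2 μ)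
    (hg_inj : Injective g) : ∃ N, μ N = 0 ∧ InjOn φ Nᶜ := by
  obtain ⟨h, -, hae⟩ := hφ g hg
  refine ⟨{x | g x ≠ h (φ x)}, ae_iff.mp hae, fun x hx y hy hxy => hg_inj ?_⟩
  simp only [mem_compl_iff, mem_ofPred_eq, not_not] at hx hy
  rw [hx, hy, hxy]

theorem measure_eq_zero_of_injOn_diff_of_forall_eq {α β : Type*} [MeasurableSpace α]
    {μ : Measure α} [NullSingletonClass μ] {φ : α → β} {s N : Set α} {c : β}
    (hN : μ N = 0) (hinj : InjOn φ (s \ N)) (hconst : ∀ x ∈ s, φ x = c) : μ s = 0 := by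
  have hsub : (s \ N).Subsingleton := fun x hx y hy =>
    hinj hx hy ((hconst x hx.1).trans (hconst y hy.1).symm)
  exact measure_mono_null (subset_sdiff_union _ _) (measure_union_null (hsub.measure_zero μ) hN)

theorem exists_ne_eq_of_mem_uIoo {α δ : Type*} [ConditionallyCompleteLinearOrder α]
    [TopologicalSpace α] [OrderTopology α] [DenselyOrdered α] [LinearOrder δ]
    [TopologicalSpace δ] [OrderClosedTopology δ] {φ : α → δ} {a b t : α} {v : δ}
    (hc : ContinuousOn φ (Icc a b)) (hab : φ a = φ b) (ht : t ∈ Icc a b)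
    (hv : v ∈ uIoo (φ a) (φ t)) :
    ∃ x ∈ Icc a b, ∃ y ∈ Icc a b, x ≠ y ∧ φ x = v ∧ φ y = v := by
  have hv_left : v ∈ uIcc (φ a) (φ t) := uIoo_subset_uIcc_self hv
  have hv_right : v ∈ uIcc (φ t) (φ b) := by rwa [uIcc_comm, ← hab]
  obtain ⟨x, hx, rfl⟩ := intermediate_value_uIcc
    (hc.mono (by rw [uIcc_of_le ht.1]; exact Icc_subset_Icc_right ht.2)) hv_left
  obtain ⟨y, hy, hyx⟩ := intermediate_value_uIcc
    (hc.mono (by rw [uIcc_of_le ht.2]; exact Icc_subset_Icc_left ht.1)) hv_right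
  rw [uIcc_of_le ht.1] at hx
  rw [uIcc_of_le ht.2] at hy
  have hxt : x ≠ t := fun h => right_notMem_uIoo (h ▸ hv)
  exact ⟨x, ⟨hx.1, hx.2.trans ht.2⟩, y, ⟨ht.1.trans hy.1, hy.2⟩,
    ((lt_of_le_of_ne hx.2 hxt).trans_le hy.1).ne, rfl, hyx⟩

theorem Real.injOn_of_injOn_diff_null {φ : ℝ → ℝ} {s N : Set ℝ} (hs : s.OrdConnected)
    (hc : ContinuousOn φ s) (hN : volume N = 0) (hφN : volume (φ '' N) = 0)
    (hinj : InjOn φ (s \ N)) : InjOn φ s := by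
  intro a ha b hb hφab
  by_contra hne
  wlog hab : a < b generalizing a b
  · exact this hb ha hφab.symm (Ne.symm hne) (lt_of_le_of_ne (not_lt.mp hab) (Ne.symm hne))
  have hsub : Icc a b ⊆ s := hs.out ha hb
  by_cases hconst : ∀ t ∈ Icc a b, φ t = φ a
  · have hzero := measure_eq_zero_of_injOn_diff_of_forall_eq hN
      (hinj.mono (sdiff_subset_sdiff_left hsub)) hconst
    rw [Real.volume_Icc, ENNReal.ofReal_eq_zero] at hzero
    linarith
  · push Not at hconst
    obtain ⟨t, ht, hφt⟩ := hconst
    have hcover : uIoo (φ a) (φ t) ⊆ φ '' N := by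
      intro v hv
      obtain ⟨x, hx, y, hy, hxy, rfl, hyx⟩ :=
        exists_ne_eq_of_mem_uIoo (hc.mono hsub) hφab ht hv
      by_contra hvN
      exact hxy (hinj ⟨hsub hx, fun h => hvN ⟨x, h, rfl⟩⟩
        ⟨hsub hy, fun h => hvN ⟨y, h, hyx⟩⟩ hyx.symm)
    have hzero := measure_mono_null hcover hφN
    rw [Real.volume_uIoo, ENNReal.ofReal_eq_zero, abs_nonpos_iff, sub_eq_zero] at hzero
    exact hφt hzero

/-- Let `φ : [0,1] → ℝ` be continuous and map Lebesgue null sets to null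
sets.  If `φ` is essentially injective with respect to Lebesgue measure restricted to
`[0,1]`, then `φ` is injective on `[0,1]`. -/
theorem statement13 (φ : ℝ → ℝ) (hc : ContinuousOn φ (Set.Icc 0 1))
    (hnull : ∀ N ⊆ Set.Icc (0 : ℝ) 1, volume N = 0 → volume (φ '' N) = 0)
    (hess : EssInj (volume.restrict (Set.Icc (0 : ℝ) 1)) φ) :
    Set.InjOn φ (Set.Icc (0 : ℝ) 1) := by
  have hid : MemLp (fun x : ℝ => (x : ℂ)) 2 (volume.restrict (Icc 0 1)) := by
    refine MemLp.of_bound Complex.continuous_ofReal.aestronglyMeasurable 1 ?_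
    filter_upwards [ae_restrict_mem measurableSet_Icc] with x hx
    simpa [abs_le] using ⟨by linarith [hx.1], hx.2⟩
  obtain ⟨N, hN, hinj⟩ := hess.exists_null_injOn_compl_s13 hid Complex.ofReal_injective
  rw [Measure.restrict_apply' measurableSet_Icc] at hN
  exact Real.injOn_of_injOn_diff_null ordConnected_Icc hc hN (hnull _ inter_subset_right hN)
    (hinj.mono fun x hx hxN => hx.2 ⟨hxN, hx.1⟩)
end
end

section
/- Let z, f ∈ C¹(ℝ) with z(t) ≠ 0 for all t, let K ∈ ℝ, and define φ : ℝ² → ℝ² by φ(x₁,x₂) = ( z(x₂) x₁ + f(x₂), ∫₁^{x₂} dτ / z(τ) + K ). If z(x₂) > 1 on a subset of (0,1) of positive Lebesgue measure, then φ([0,1)²) does not tile ℝ² by ℤ²; in fact, there exists a nonzero k ∈ ℤ² such that (φ((0,1)²) + k) ∩ φ((0,1)²) has positive Lebesgue measure. -/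
open MeasureTheory Filter Set
open scoped Real ENNReal Topology

noncomputable section

/-- Translation of a subset of `ℝ²` by an integer vector. -/
def trZ (k : ℤ × ℤ) (S : Set (ℝ × ℝ)) : Set (ℝ × ℝ) :=
  (fun p : ℝ × ℝ => (p.1 + (k.1 : ℝ), p.2 + (k.2 : ℝ))) '' S

/-!
The map `φ` is fibrewise affine: it sends the horizontal segment at height `t` onto a segment
of length `z t` at height `g t`, where `g' = 1/z`. Its Jacobian determinant is therefore `1`, so
`φ` preserves Lebesgue measure. On the positive-measure set of heights `t` with `z t ≥ d > 1`,
the image segment `φ((0,1) × {t})` has length `> 1`, so it overlaps its translate by `(1,0)` in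
a segment of length `z t - 1`; more precisely `φ(a, t) = φ(a - 1/z t, t) + (1,0)` for
`a ∈ (1/d, 1)`. The preimage of the overlap thus contains `(1/d, 1) × {t : z t ≥ d}`, which has
positive measure, and the overlap in turn obstructs tiling.
-/

lemma Continuous.pos_of_ne_zero {X : Type*} [TopologicalSpace X] [PreconnectedSpace X]
    {u : X → ℝ} (hu : Continuous u) (h0 : ∀ x, u x ≠ 0) {x₀ : X} (hx₀ : 0 < u x₀)
    (x : X) : 0 < u x := by
  by_contra! hx
  obtain ⟨y, hy⟩ := intermediate_value_univ x x₀ hu ⟨hx, hx₀.le⟩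
  exact h0 y hy

lemma MeasureTheory.exists_lt_measure_setOf_le_pos {α : Type*} [MeasurableSpace α]
    {μ : Measure α} {s : Set α} {u : α → ℝ} {a : ℝ} (h : 0 < μ {x | x ∈ s ∧ a < u x}) :
    ∃ b, a < b ∧ 0 < μ {x | x ∈ s ∧ b ≤ u x} := by
  have hcover :
      {x | x ∈ s ∧ a < u x} = ⋃ n : ℕ, {x | x ∈ s ∧ a + 1 / (n + 1 : ℝ) ≤ u x} := by
    ext x
    simp only [mem_ofPred_eq, mem_iUnion]
    refine ⟨fun ⟨hs, hx⟩ => ?_, fun ⟨n, hs, hx⟩ => ⟨hs, ?_⟩⟩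
    · obtain ⟨n, hn⟩ := exists_nat_one_div_lt (sub_pos.mpr hx)
      exact ⟨n, hs, by linarith⟩
    · linarith [Nat.one_div_pos_of_nat (α := ℝ) (n := n)]
  rw [hcover] at h
  obtain ⟨n, hn⟩ := exists_measure_pos_of_not_measure_iUnion_null h.ne'
  exact ⟨a + 1 / (n + 1 : ℝ), lt_add_of_pos_right a Nat.one_div_pos_of_nat, hn⟩

open ContinuousLinearMap in
lemma ContinuousLinearMap.det_smul_fst_add_smul_snd_prod (α β γ : ℝ) :
    ((α • fst ℝ ℝ ℝ + β • snd ℝ ℝ ℝ).prod (γ • snd ℝ ℝ ℝ)).det = α * γ := by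
  rw [ContinuousLinearMap.det, ← LinearMap.det_toMatrix (Module.Basis.finTwoProd ℝ),
    Matrix.det_fin_two]
  simp [LinearMap.toMatrix_apply]

lemma trZ_zero (S : Set (ℝ × ℝ)) : trZ 0 S = S := by
  simp [trZ]

lemma trZ_mono {S T : Set (ℝ × ℝ)} (h : S ⊆ T) (k : ℤ × ℤ) : trZ k S ⊆ trZ k T :=
  image_mono h

lemma not_pairwise_volume_trZ_inter_null {S T : Set (ℝ × ℝ)} (hST : S ⊆ T) {k : ℤ × ℤ}
    (hk : k ≠ 0) (h : 0 < volume (trZ k S ∩ S)) :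
    ¬ ∀ k k' : ℤ × ℤ, k ≠ k' → volume (trZ k T ∩ trZ k' T) = 0 := by
  intro hnull
  have hle : volume (trZ k S ∩ S) ≤ volume (trZ k T ∩ trZ 0 T) := by
    rw [trZ_zero]
    exact measure_mono (inter_subset_inter (trZ_mono hST k) hST)
  rw [hnull k 0 hk] at hle
  exact h.ne' (nonpos_iff_eq_zero.mp hle)

def fiberAffineMap (z f g : ℝ → ℝ) (p : ℝ × ℝ) : ℝ × ℝ :=
  (z p.2 * p.1 + f p.2, g p.2)

section FiberAffineMap

variable {z f g : ℝ → ℝ}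

open ContinuousLinearMap in
lemma hasFDerivAt_fiberAffineMap {p : ℝ × ℝ} {g' : ℝ} (hz : DifferentiableAt ℝ z p.2)
    (hf : DifferentiableAt ℝ f p.2) (hg : HasDerivAt g g' p.2) :
    HasFDerivAt (fiberAffineMap z f g)
      ((z p.2 • fst ℝ ℝ ℝ + (p.1 * deriv z p.2 + deriv f p.2) • snd ℝ ℝ ℝ).prod
        (g' • snd ℝ ℝ ℝ)) p := by
  have hz' := hz.hasDerivAt.comp_hasFDerivAt p (hasFDerivAt_snd (𝕜 := ℝ) (E := ℝ) (F := ℝ))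
  have hf' := hf.hasDerivAt.comp_hasFDerivAt p (hasFDerivAt_snd (𝕜 := ℝ) (E := ℝ) (F := ℝ))
  have hg' := hg.comp_hasFDerivAt p (hasFDerivAt_snd (𝕜 := ℝ) (E := ℝ) (F := ℝ))
  refine ((hz'.mul hasFDerivAt_fst).add hf').prodMk hg' |>.congr_fderiv ?_
  ext <;> simp

lemma fiberAffineMap_injective (hz : ∀ t, z t ≠ 0) (hg : Function.Injective g) :
    Function.Injective (fiberAffineMap z f g) := by
  rintro ⟨a, t⟩ ⟨a', t'⟩ h
  simp only [fiberAffineMap, Prod.mk.injEq] at h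
  obtain rfl : t = t' := hg h.2
  simpa [hz t] using h.1

lemma volume_image_fiberAffineMap (hz : Differentiable ℝ z) (hf : Differentiable ℝ f)
    (hzpos : ∀ t, 0 < z t) (hg : ∀ t, HasDerivAt g (z t)⁻¹ t) {s : Set (ℝ × ℝ)}
    (hs : MeasurableSet s) :
    volume (fiberAffineMap z f g '' s) = volume s := by
  have hgmono : StrictMono g :=
    strictMono_of_deriv_pos fun t => (hg t).deriv ▸ inv_pos.mpr (hzpos t)
  rw [← lintegral_abs_det_fderiv_eq_addHaar_image volume hs
    (fun p _ => (hasFDerivAt_fiberAffineMap (hz _) (hf _) (hg p.2)).hasFDerivWithinAt)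
    (fiberAffineMap_injective (fun t => (hzpos t).ne') hgmono.injective).injOn]
  simp_rw [ContinuousLinearMap.det_smul_fst_add_smul_snd_prod, mul_inv_cancel₀ (hzpos _).ne',
    abs_one, ENNReal.ofReal_one, setLIntegral_one]

lemma fiberAffineMap_sub_inv_add {t : ℝ} (hz : z t ≠ 0) (a : ℝ) :
    fiberAffineMap z f g (a - (z t)⁻¹, t) + (1, 0) = fiberAffineMap z f g (a, t) := by
  simp only [fiberAffineMap, Prod.mk_add_mk, add_zero, Prod.mk.injEq, and_true]
  field_simp
  ring

lemma volume_trZ_fiberAffineMap_inter_pos (hz : Differentiable ℝ z)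
    (hf : Differentiable ℝ f) (hzpos : ∀ t, 0 < z t) (hg : ∀ t, HasDerivAt g (z t)⁻¹ t)
    (hbig : 0 < volume {t : ℝ | t ∈ Ioo (0 : ℝ) 1 ∧ 1 < z t}) :
    0 < volume (trZ (1, 0) (fiberAffineMap z f g '' Ioo (0 : ℝ) 1 ×ˢ Ioo (0 : ℝ) 1) ∩
      fiberAffineMap z f g '' Ioo (0 : ℝ) 1 ×ˢ Ioo (0 : ℝ) 1) := by
  obtain ⟨d, hd, hB⟩ := exists_lt_measure_setOf_le_pos hbig
  set B := {t : ℝ | t ∈ Ioo (0 : ℝ) 1 ∧ d ≤ z t}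
  have hBm : MeasurableSet B :=
    measurableSet_Ioo.inter (measurableSet_le measurable_const hz.continuous.measurable)
  have hE : 0 < volume (Ioo d⁻¹ 1 ×ˢ B) := by
    rw [Measure.volume_eq_prod, Measure.prod_prod, Real.volume_Ioo]
    have hd' : 0 < 1 - d⁻¹ := sub_pos.mpr (inv_lt_one_of_one_lt₀ hd)
    exact ENNReal.mul_pos (ENNReal.ofReal_pos.mpr hd').ne' hB.ne'
  rw [← volume_image_fiberAffineMap hz hf hzpos hg (measurableSet_Ioo.prod hBm)] at hE
  refine hE.trans_le (measure_mono ?_)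
  rintro _ ⟨⟨a, t⟩, ⟨ha, ht, hdt⟩, rfl⟩
  have hinv_pos : 0 < (z t)⁻¹ := inv_pos.mpr (hzpos t)
  have hinv_lt : (z t)⁻¹ < a := (inv_anti₀ (by linarith) hdt).trans_lt ha.1
  have ha' : a ∈ Ioo (0 : ℝ) 1 := ⟨hinv_pos.trans hinv_lt, ha.2⟩
  have hshift : a - (z t)⁻¹ ∈ Ioo (0 : ℝ) 1 := ⟨by linarith, by linarith [ha.2]⟩
  refine ⟨⟨_, ⟨(a - (z t)⁻¹, t), ⟨hshift, ht⟩, rfl⟩, ?_⟩, ⟨(a, t), ⟨ha', ht⟩, rfl⟩⟩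
  rw [← fiberAffineMap_sub_inv_add (hzpos t).ne' a]
  ext <;> simp

end FiberAffineMap
/-- Let `φ(x₁,x₂) = (z(x₂)x₁ + f(x₂), ∫₁^{x₂} dτ/z(τ) + K)` with
`z, f ∈ C¹(ℝ)`, `z` nowhere vanishing.  If `z > 1` on a subset of `(0,1)` of positive
measure, then `φ([0,1)²)` does not tile `ℝ²` by `ℤ²`; in fact some nonzero integer translate
of `φ((0,1)²)` meets it in a set of positive measure. -/
theorem statement17 (z f : ℝ → ℝ) (hz : ContDiff ℝ 1 z) (hf : ContDiff ℝ 1 f)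
    (hz0 : ∀ t, z t ≠ 0) (K : ℝ)
    (φ : ℝ × ℝ → ℝ × ℝ)
    (hφ : ∀ p : ℝ × ℝ, φ p = (z p.2 * p.1 + f p.2, (∫ τ in (1 : ℝ)..p.2, 1 / z τ) + K))
    (hbig : 0 < volume {t : ℝ | t ∈ Set.Ioo (0 : ℝ) 1 ∧ 1 < z t}) :
    ¬ ((∀ k k' : ℤ × ℤ, k ≠ k' →
          volume (trZ k (φ '' (Set.Ico (0:ℝ) 1 ×ˢ Set.Ico (0:ℝ) 1)) ∩
                  trZ k' (φ '' (Set.Ico (0:ℝ) 1 ×ˢ Set.Ico (0:ℝ) 1))) = 0) ∧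
        volume (Set.univ \ ⋃ k : ℤ × ℤ, trZ k (φ '' (Set.Ico (0:ℝ) 1 ×ˢ Set.Ico (0:ℝ) 1))) = 0)
    ∧ ∃ k : ℤ × ℤ, k ≠ 0 ∧
        0 < volume (trZ k (φ '' (Set.Ioo (0:ℝ) 1 ×ˢ Set.Ioo (0:ℝ) 1)) ∩
                    (φ '' (Set.Ioo (0:ℝ) 1 ×ˢ Set.Ioo (0:ℝ) 1))) := by
  obtain ⟨t₀, -, ht₀⟩ := nonempty_of_measure_ne_zero hbig.ne'
  have hzpos : ∀ t, 0 < z t := hz.continuous.pos_of_ne_zero hz0 (one_pos.trans ht₀)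
  have hzinv : Continuous fun τ => 1 / z τ := continuous_const.div hz.continuous hz0
  set g : ℝ → ℝ := fun t => (∫ τ in (1 : ℝ)..t, 1 / z τ) + K
  have hg : ∀ t, HasDerivAt g (z t)⁻¹ t := fun t => by
    rw [← one_div]
    exact (intervalIntegral.integral_hasDerivAt_right (hzinv.intervalIntegrable 1 t)
      (hzinv.stronglyMeasurableAtFilter _ _) hzinv.continuousAt).add_const K
  obtain rfl : φ = fiberAffineMap z f g := funext hφ
  have hoverlap := volume_trZ_fiberAffineMap_inter_pos (hz.differentiable one_ne_zero)
    (hf.differentiable one_ne_zero) hzpos hg hbig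
  refine ⟨fun htiling => ?_, (1, 0), by decide, hoverlap⟩
  exact not_pairwise_volume_trZ_inter_null
    (image_mono (Set.prod_mono Ioo_subset_Ico_self Ioo_subset_Ico_self)) (by decide) hoverlap
    htiling.1
end
end
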